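/- arXiv:1812.11449 — 5 statements merged into one kernel-verified Lean document; each statement's English description precedes it below -/
import Mathlib

section
/- For integers n, r with n > 2r ≥ 2, (1/n) Σ_{j=0}^{n−1} 4^r sin^{2r}(πj/n) = 4^r · (2r−1)(2r−3)···1 / ((2r)(2r−2)···2), i.e., the average of the squared eigenvalue moduli of T_r equals 4^r (2r−1)!!/(2r)!!. -/
open Real

section Aux

open Finset Complex

private lemma one_sub_pow_expand {R : Type*} [CommRing R] (x : R) (r : ℕ) :
    (1 - x) ^ r = ∑ a ∈ Finset.range (r + 1), (-1 : R) ^ a * x ^ a * (r.choose a : R) := by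
  rw [sub_eq_add_neg, add_comm, add_pow]
  refine Finset.sum_congr rfl fun a _ => ?_
  rw [neg_pow]
  ring

private lemma sum_choose_sq (r : ℕ) :
    ∑ a ∈ Finset.range (r + 1), r.choose a * r.choose a = (2 * r).choose r := by
  rw [two_mul, Nat.add_choose_eq, Finset.Nat.sum_antidiagonal_eq_sum_range_succ_mk]
  refine (Finset.sum_congr rfl fun a ha => ?_).symm
  rw [Nat.choose_symm (by simpa [Nat.lt_succ_iff] using ha)]

private lemma geom_root_sum (n : ℕ) (u : ℂ) (hu : u ^ n = 1) :
    ∑ j ∈ Finset.range n, u ^ j = if u = 1 then (n : ℂ) else 0 := by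
  split_ifs with h
  · simp [h]
  · rw [geom_sum_eq h, hu, sub_self, zero_div]

private lemma complex_sum_eq (n r : ℕ) (hr : 1 ≤ r) (hn : 2 * r < n) :
    ∑ j ∈ Finset.range n, (4 : ℂ) ^ r * ((Real.sin (Real.pi * j / n) : ℝ) : ℂ) ^ (2 * r)
      = (n : ℂ) * ((2 * r).choose r : ℂ) := by
  have hn0 : (0 : ℕ) < n := by omega
  have hnC : (n : ℂ) ≠ 0 := by exact_mod_cast hn0.ne'
  set ω : ℂ := Complex.exp (2 * Real.pi * Complex.I / n) with hω
  have hprim : IsPrimitiveRoot ω n := Complex.isPrimitiveRoot_exp n hn0.ne'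
  have hωn : ω ^ n = 1 := hprim.pow_eq_one
  have hω0 : ω ≠ 0 := Complex.exp_ne_zero _
  -- pointwise identity
  have key : ∀ j : ℕ, (4 : ℂ) ^ r * ((Real.sin (Real.pi * j / n) : ℝ) : ℂ) ^ (2 * r)
      = (1 - ω ^ j) ^ r * (1 - (ω ^ j)⁻¹) ^ r := by
    intro j
    have hexp : ω ^ j = Complex.exp (((2 * Real.pi * j / n : ℝ) : ℂ) * Complex.I) := by
      rw [hω, ← Complex.exp_nat_mul]
      congr 1
      push_cast
      ring
    have hinv : (ω ^ j)⁻¹ = Complex.exp (-(((2 * Real.pi * j / n : ℝ) : ℂ) * Complex.I)) := by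
      rw [hexp, ← Complex.exp_neg]
    have hcos : ω ^ j + (ω ^ j)⁻¹ = 2 * ((Real.cos (2 * Real.pi * j / n) : ℝ) : ℂ) := by
      rw [hinv, hexp, Complex.exp_mul_I, ← neg_mul, Complex.exp_mul_I,
        Complex.cos_neg, Complex.sin_neg, ← Complex.ofReal_cos, ← Complex.ofReal_sin]
      push_cast
      ring
    have hreal : 2 - 2 * Real.cos (2 * Real.pi * j / n)
        = 4 * Real.sin (Real.pi * j / n) ^ 2 := by
      have := Real.sin_sq_eq_half_sub (Real.pi * j / n)
      have h2 : 2 * (Real.pi * j / n) = 2 * Real.pi * j / n := by ring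
      rw [h2] at this
      linarith
    have hprod : (1 - ω ^ j) * (1 - (ω ^ j)⁻¹)
        = (4 : ℂ) * ((Real.sin (Real.pi * j / n) : ℝ) : ℂ) ^ 2 := by
      have hu : (ω ^ j) * (ω ^ j)⁻¹ = 1 := mul_inv_cancel₀ (pow_ne_zero _ hω0)
      calc (1 - ω ^ j) * (1 - (ω ^ j)⁻¹)
          = 1 + (ω ^ j) * (ω ^ j)⁻¹ - (ω ^ j + (ω ^ j)⁻¹) := by ring
        _ = 2 - 2 * ((Real.cos (2 * Real.pi * j / n) : ℝ) : ℂ) := by rw [hu, hcos]; ring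
        _ = (((2 - 2 * Real.cos (2 * Real.pi * j / n)) : ℝ) : ℂ) := by push_cast; ring
        _ = (((4 * Real.sin (Real.pi * j / n) ^ 2) : ℝ) : ℂ) := by rw [hreal]
        _ = (4 : ℂ) * ((Real.sin (Real.pi * j / n) : ℝ) : ℂ) ^ 2 := by push_cast; ring
    rw [← mul_pow, hprod, mul_pow, ← pow_mul]
  calc ∑ j ∈ Finset.range n, (4 : ℂ) ^ r * ((Real.sin (Real.pi * j / n) : ℝ) : ℂ) ^ (2 * r)
      = ∑ j ∈ Finset.range n, (1 - ω ^ j) ^ r * (1 - (ω ^ j)⁻¹) ^ r :=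
        Finset.sum_congr rfl fun j _ => key j
    _ = ∑ j ∈ Finset.range n, ∑ a ∈ Finset.range (r + 1), ∑ b ∈ Finset.range (r + 1),
          ((-1 : ℂ) ^ a * (r.choose a : ℂ)) * ((-1 : ℂ) ^ b * (r.choose b : ℂ))
            * (ω ^ a * (ω ^ b)⁻¹) ^ j := by
        refine Finset.sum_congr rfl fun j _ => ?_
        rw [one_sub_pow_expand, one_sub_pow_expand, Finset.sum_mul_sum]
        refine Finset.sum_congr rfl fun a _ => Finset.sum_congr rfl fun b _ => ?_
        rw [mul_pow, ← pow_right_comm ω j a, inv_pow, inv_pow, ← pow_right_comm ω j b]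
        ring
    _ = ∑ a ∈ Finset.range (r + 1), ∑ b ∈ Finset.range (r + 1),
          ((-1 : ℂ) ^ a * (r.choose a : ℂ)) * ((-1 : ℂ) ^ b * (r.choose b : ℂ))
            * ∑ j ∈ Finset.range n, (ω ^ a * (ω ^ b)⁻¹) ^ j := by
        rw [Finset.sum_comm]
        refine Finset.sum_congr rfl fun a _ => ?_
        rw [Finset.sum_comm]
        refine Finset.sum_congr rfl fun b _ => ?_
        rw [Finset.mul_sum]
    _ = ∑ a ∈ Finset.range (r + 1), ∑ b ∈ Finset.range (r + 1),
          ((-1 : ℂ) ^ a * (r.choose a : ℂ)) * ((-1 : ℂ) ^ b * (r.choose b : ℂ))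
            * (if a = b then (n : ℂ) else 0) := by
        refine Finset.sum_congr rfl fun a ha => Finset.sum_congr rfl fun b hb => ?_
        congr 1
        have hu : (ω ^ a * (ω ^ b)⁻¹) ^ n = 1 := by
          rw [mul_pow, inv_pow, ← pow_mul, ← pow_mul, mul_comm a n, mul_comm b n,
            pow_mul, pow_mul, hωn, one_pow, one_pow, inv_one, mul_one]
        rw [geom_root_sum n _ hu]
        have ha' : a < n := by
          have := Finset.mem_range.mp ha; omega
        have hb' : b < n := by
          have := Finset.mem_range.mp hb; omega
        have hiff : (ω ^ a * (ω ^ b)⁻¹ = 1) ↔ a = b := by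
          rw [mul_inv_eq_one₀ (pow_ne_zero _ hω0)]
          exact ⟨fun h => hprim.pow_inj ha' hb' h, fun h => by rw [h]⟩
        by_cases hab : a = b
        · rw [if_pos (hiff.mpr hab), if_pos hab]
        · rw [if_neg (fun h => hab (hiff.mp h)), if_neg hab]
    _ = (n : ℂ) * ((2 * r).choose r : ℂ) := by
        have : ∀ a ∈ Finset.range (r + 1), (∑ b ∈ Finset.range (r + 1),
            ((-1 : ℂ) ^ a * (r.choose a : ℂ)) * ((-1 : ℂ) ^ b * (r.choose b : ℂ))
              * (if a = b then (n : ℂ) else 0))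
            = (r.choose a : ℂ) * (r.choose a : ℂ) * n := by
          intro a ha
          rw [Finset.sum_eq_single a]
          · rw [if_pos rfl]
            have h1 : ((-1 : ℂ) ^ a) * ((-1 : ℂ) ^ a) = 1 := by
              rw [← pow_add, ← two_mul, pow_mul, neg_one_sq, one_pow]
            rw [show ((-1:ℂ) ^ a * (r.choose a : ℂ)) * ((-1:ℂ) ^ a * (r.choose a : ℂ)) * (n : ℂ)
                = (((-1:ℂ) ^ a) * ((-1:ℂ) ^ a)) * ((r.choose a : ℂ) * (r.choose a : ℂ) * n)
              from by ring, h1, one_mul]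
          · intro b _ hb'
            rw [if_neg (Ne.symm hb'), mul_zero]
          · intro h; exact absurd ha h
        rw [Finset.sum_congr rfl this, ← Finset.sum_mul, mul_comm]
        congr 1
        norm_cast
        exact sum_choose_sq r

end Aux

/-- for `n > 2r ≥ 2`, the average of the squared eigenvalue moduli of `T_r`:
`(1/n) Σ_{j=0}^{n−1} 4^r sin^{2r}(πj/n) = 4^r (2r−1)!!/(2r)!!`. -/
theorem average_squared_eigenvalues
    (n r : ℕ) (hr : 1 ≤ r) (hn : 2 * r < n) :
    (1 / (n : ℝ)) * ∑ j : Fin n, 4 ^ r * Real.sin (Real.pi * (j : ℕ) / n) ^ (2 * r)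
      = 4 ^ r * ((Nat.doubleFactorial (2 * r - 1) : ℝ) / (Nat.doubleFactorial (2 * r) : ℝ)) := by
  have hn0 : (0 : ℕ) < n := by omega
  have hnR : (n : ℝ) ≠ 0 := by exact_mod_cast hn0.ne'
  -- the real sum
  have hsum : ∑ j : Fin n, (4 : ℝ) ^ r * Real.sin (Real.pi * (j : ℕ) / n) ^ (2 * r)
      = (n : ℝ) * ((2 * r).choose r : ℝ) := by
    have hC := complex_sum_eq n r hr hn
    apply Complex.ofReal_injective
    push_cast [-Complex.ofReal_sin]
    rw [Fin.sum_univ_eq_sum_range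
      (fun j => (4 : ℂ) ^ r * ((Real.sin (Real.pi * j / n) : ℝ) : ℂ) ^ (2 * r))]
    exact hC
  rw [hsum, ← mul_assoc, one_div, inv_mul_cancel₀ hnR, one_mul]
  -- arithmetic with double factorials
  have h2r : 2 * r - 1 + 1 = 2 * r := by omega
  have f2 : (Nat.factorial (2 * r) : ℝ) = ((2 * r).doubleFactorial : ℝ) * ((2 * r - 1).doubleFactorial : ℝ) := by
    have := Nat.factorial_eq_mul_doubleFactorial (2 * r - 1)
    rw [h2r] at this
    exact_mod_cast this
  have f3 : ((2 * r).doubleFactorial : ℝ) = 2 ^ r * (Nat.factorial r : ℝ) := by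
    exact_mod_cast Nat.doubleFactorial_two_mul r
  have f1 : (((2 * r).choose r : ℝ)) * (Nat.factorial r : ℝ) * (Nat.factorial r : ℝ) = (Nat.factorial (2 * r) : ℝ) := by
    have h := Nat.choose_mul_factorial_mul_factorial (by omega : r ≤ 2 * r)
    rw [show 2 * r - r = r by omega] at h
    exact_mod_cast h
  have hrf : (Nat.factorial r : ℝ) ≠ 0 := by positivity
  have hdf : ((2 * r).doubleFactorial : ℝ) ≠ 0 := by positivity
  have h4 : (4 : ℝ) ^ r = 2 ^ r * 2 ^ r := by rw [← mul_pow]; norm_num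
  field_simp
  apply mul_right_cancel₀ hrf
  linear_combination (((2 * r).choose r : ℝ) * (Nat.factorial r : ℝ)) * f3
    + (2 : ℝ) ^ r * f1 + (2 : ℝ) ^ r * f2
    + (2 : ℝ) ^ r * ((2 * r - 1).doubleFactorial : ℝ) * f3
    - (Nat.factorial r : ℝ) * ((2 * r - 1).doubleFactorial : ℝ) * h4
end

section
/- In the denoising case (A = C = I) with circulant regularizer T = F⁻¹ΛF, the fixed point iteration of Algorithm 2 has the closed form λ_{k+1} = f(λ_k) where f(λ) = λ · (‖|Λ|²B(λ)û‖₂² / ‖|Λ|B(λ)û‖₂²) · (trace(B(λ)) / trace(|Λ|²B(λ))), with B(λ) = (I + λ|Λ|²)⁻¹ and û = Fũ. Explicitly, the update λ_{k+1} = [‖u*_k − ũ‖²/(n − trace(H_k⁻¹))] · [(n − λ_k trace(H_k⁻¹TᵀT))/‖Tu*_k‖²] with H_k = I + λ_k TᵀT and u*_k = H_k⁻¹ũ equals f(λ_k). -/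
/-!
Conjugation by the unitary `F` turns `TᴴT`, `H` and `H⁻¹` into the diagonal matrices `|Λ|²`,
`I + λ|Λ|²` and `B`, and preserves norms and traces. In Fourier coordinates the filter factors
`b_j = (1 + λ|γ_j|²)⁻¹` satisfy `1 - b_j = λ|γ_j|² b_j`, whence `‖u* - ũ‖² = λ²‖|Λ|²Bû‖²`,
`n - tr H⁻¹ = λ tr(|Λ|²B)`, `n - λ tr(H⁻¹TᴴT) = tr B` and `‖Tu*‖² = ‖|Λ|Bû‖²`.
Substituting these four identities into the update gives `f(λ)`.
-/

open Matrix Complex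

/-- Squared Euclidean norm of a complex vector. -/
noncomputable def cnormSq {ι : Type*} [Fintype ι] (v : ι → ℂ) : ℝ := ∑ j, ‖v j‖ ^ 2

section NormSq

variable {ι : Type*} [Fintype ι]

lemma cnormSq_eq_re_star_dotProduct (v : ι → ℂ) : cnormSq v = (star v ⬝ᵥ v).re := by
  simp [cnormSq, dotProduct, Complex.re_sum, ← Complex.normSq_eq_conj_mul_self, Complex.sq_norm]

lemma cnormSq_mul (a v : ι → ℂ) : cnormSq (a * v) = ∑ j, ‖a j‖ ^ 2 * ‖v j‖ ^ 2 := by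
  simp only [cnormSq, Pi.mul_apply, norm_mul, mul_pow]

lemma cnormSq_smul (c : ℂ) (v : ι → ℂ) : cnormSq (c • v) = ‖c‖ ^ 2 * cnormSq v := by
  simp only [cnormSq, Pi.smul_apply, smul_eq_mul, norm_mul, mul_pow, Finset.mul_sum]

lemma cnormSq_ofReal_norm_mul (a v : ι → ℂ) :
    cnormSq ((fun j => ((‖a j‖ : ℝ) : ℂ)) * v) = cnormSq (a * v) := by
  simp only [cnormSq_mul, Complex.norm_real, norm_norm]

lemma cnormSq_conjTranspose_mulVec [DecidableEq ι] {U : Matrix ι ι ℂ}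
    (hU : U ∈ unitaryGroup ι ℂ) (v : ι → ℂ) : cnormSq (Uᴴ *ᵥ v) = cnormSq v := by
  rw [cnormSq_eq_re_star_dotProduct, cnormSq_eq_re_star_dotProduct, star_mulVec,
    dotProduct_mulVec, vecMul_vecMul, conjTranspose_conjTranspose,
    ← star_eq_conjTranspose, Unitary.mul_star_self_of_mem hU, vecMul_one]

end NormSq

lemma conjTranspose_conj {ι α : Type*} [Fintype ι] [CommRing α] [StarRing α]
    (U A : Matrix ι ι α) : (Uᴴ * A * U)ᴴ = Uᴴ * Aᴴ * U := by
  simp only [conjTranspose_mul, conjTranspose_conjTranspose, Matrix.mul_assoc]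

section UnitaryConj

variable {ι α : Type*} [Fintype ι] [DecidableEq ι] [CommRing α] [StarRing α]
  {U : Matrix ι ι α}

lemma conjTranspose_mulVec_mulVec_self (hU : U ∈ unitaryGroup ι α) (v : ι → α) :
    Uᴴ *ᵥ (U *ᵥ v) = v := by
  rw [mulVec_mulVec, ← star_eq_conjTranspose, Unitary.star_mul_self_of_mem hU, one_mulVec]

lemma conj_mul_conj (hU : U ∈ unitaryGroup ι α) (A B : Matrix ι ι α) :
    Uᴴ * A * U * (Uᴴ * B * U) = Uᴴ * (A * B) * U := by
  have hUU : U * Uᴴ = 1 := Unitary.mul_star_self_of_mem hU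
  simp only [Matrix.mul_assoc, ← Matrix.mul_assoc U Uᴴ, hUU, Matrix.one_mul]

lemma one_add_smul_conj (hU : U ∈ unitaryGroup ι α) (c : α) (A : Matrix ι ι α) :
    1 + c • (Uᴴ * A * U) = Uᴴ * (1 + c • A) * U := by
  rw [Matrix.mul_add, Matrix.add_mul, Matrix.mul_one, ← star_eq_conjTranspose,
    Unitary.star_mul_self_of_mem hU, Matrix.mul_smul, Matrix.smul_mul]

lemma inv_conj (hU : U ∈ unitaryGroup ι α) (A : Matrix ι ι α) :
    (Uᴴ * A * U)⁻¹ = Uᴴ * A⁻¹ * U := by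
  have hinv : U⁻¹ = Uᴴ := inv_eq_left_inv (Unitary.star_mul_self_of_mem hU)
  have hinv' : Uᴴ⁻¹ = U := inv_eq_left_inv (Unitary.mul_star_self_of_mem hU)
  rw [Matrix.mul_inv_rev, Matrix.mul_inv_rev, hinv, hinv', Matrix.mul_assoc]

lemma trace_conj (hU : U ∈ unitaryGroup ι α) (A : Matrix ι ι α) :
    (Uᴴ * A * U).trace = A.trace := by
  rw [trace_mul_cycle, ← star_eq_conjTranspose, Unitary.mul_star_self_of_mem hU, Matrix.one_mul]

lemma conj_mulVec_conjTranspose_mulVec (hU : U ∈ unitaryGroup ι α) (A : Matrix ι ι α)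
    (v : ι → α) : (Uᴴ * A * U) *ᵥ (Uᴴ *ᵥ v) = Uᴴ *ᵥ (A *ᵥ v) := by
  rw [mulVec_mulVec, Matrix.mul_assoc _ U, ← star_eq_conjTranspose,
    Unitary.mul_star_self_of_mem hU, Matrix.mul_one, ← mulVec_mulVec]

end UnitaryConj

section Diagonal

variable {ι K : Type*} [Fintype ι] [DecidableEq ι] [Field K] {c : K} {d : ι → K}

lemma diagonal_mulVec_eq_mul (a v : ι → K) : diagonal a *ᵥ v = a * v :=
  funext (mulVec_diagonal a v)

lemma inv_one_add_smul_diagonal (h : ∀ j, 1 + c * d j ≠ 0) :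
    (1 + c • diagonal d)⁻¹ = diagonal (1 + c • d)⁻¹ := by
  rw [← diagonal_one, ← diagonal_smul, diagonal_add]
  refine inv_eq_right_inv ?_
  rw [diagonal_mul_diagonal, ← diagonal_one]
  exact congrArg diagonal (funext fun j => mul_inv_cancel₀ (h j))

end Diagonal

lemma inv_one_add_smul_conj_diagonal {ι K : Type*} [Fintype ι] [DecidableEq ι] [Field K]
    [StarRing K] {U : Matrix ι ι K} (hU : U ∈ unitaryGroup ι K) {c : K} {d : ι → K}
    (h : ∀ j, 1 + c * d j ≠ 0) :
    (1 + c • (Uᴴ * diagonal d * U))⁻¹ = Uᴴ * diagonal (1 + c • d)⁻¹ * U := by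
  rw [one_add_smul_conj hU, inv_conj hU, inv_one_add_smul_diagonal h]

lemma conjTranspose_mul_self_conj_diagonal {ι : Type*} [Fintype ι] [DecidableEq ι]
    {U : Matrix ι ι ℂ} (hU : U ∈ unitaryGroup ι ℂ) (γ : ι → ℂ) :
    (Uᴴ * diagonal γ * U)ᴴ * (Uᴴ * diagonal γ * U)
      = Uᴴ * diagonal (fun j => ((‖γ j‖ ^ 2 : ℝ) : ℂ)) * U := by
  rw [conjTranspose_conj, conj_mul_conj hU, diagonal_conjTranspose, diagonal_mul_diagonal]
  congr 3 with j
  simp [Complex.conj_mul']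

section Resolvent

variable {ι K : Type*} [Field K] {c : K} {d : ι → K}

lemma inv_one_add_smul_add_smul_mul_inv (h : ∀ j, 1 + c * d j ≠ 0) :
    (1 + c • d)⁻¹ + c • (d * (1 + c • d)⁻¹) = 1 := by
  funext j
  simp only [Pi.add_apply, Pi.inv_apply, Pi.smul_apply, Pi.mul_apply, Pi.one_apply, smul_eq_mul]
  linear_combination mul_inv_cancel₀ (h j)

lemma inv_one_add_smul_mul_sub_self (h : ∀ j, 1 + c * d j ≠ 0) (v : ι → K) :
    (1 + c • d)⁻¹ * v - v = -c • (d * ((1 + c • d)⁻¹ * v)) := by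
  have hb := congrFun (inv_one_add_smul_add_smul_mul_inv h)
  funext j
  simp only [Pi.add_apply, Pi.sub_apply, Pi.smul_apply, Pi.mul_apply, Pi.one_apply,
    smul_eq_mul] at hb ⊢
  linear_combination v j * hb j

lemma sum_inv_one_add_smul_add_mul_sum [Fintype ι] (h : ∀ j, 1 + c * d j ≠ 0) :
    ∑ j, (1 + c • d)⁻¹ j + c * ∑ j, d j * (1 + c • d)⁻¹ j = Fintype.card ι := by
  have hb := congrFun (inv_one_add_smul_add_smul_mul_inv h)
  simp only [Pi.add_apply, Pi.smul_apply, Pi.mul_apply, Pi.one_apply, smul_eq_mul] at hb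
  rw [Finset.mul_sum, ← Finset.sum_add_distrib, Finset.sum_congr rfl fun j _ => hb j]
  simp

end Resolvent

theorem algorithm2_fixed_point_closed_form_general
    (n : ℕ) (lam : ℝ) (hlam : 0 < lam)
    (Fm : Matrix (Fin n) (Fin n) ℂ) (hF1 : Fm * Fmᴴ = 1)
    (γ : Fin n → ℂ)
    (T : Matrix (Fin n) (Fin n) ℂ)
    (hT : T = Fmᴴ * Matrix.diagonal γ * Fm)
    (utilde : Fin n → ℂ)
    (H : Matrix (Fin n) (Fin n) ℂ) (hH : H = 1 + (lam : ℂ) • (Tᴴ * T))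
    (ustar : Fin n → ℂ) (hustar : ustar = H⁻¹.mulVec utilde)
    (uhat : Fin n → ℂ) (huhat : uhat = Fm.mulVec utilde)
    (B : Matrix (Fin n) (Fin n) ℂ)
    (hB : B = (1 + (lam : ℂ) •
        Matrix.diagonal (fun j => ((‖γ j‖ ^ 2 : ℝ) : ℂ)))⁻¹) :
    ((cnormSq (ustar - utilde) : ℂ) / ((n : ℂ) - H⁻¹.trace)) *
        (((n : ℂ) - (lam : ℂ) * (H⁻¹ * (Tᴴ * T)).trace) / (cnormSq (T.mulVec ustar) : ℂ))
      = (lam : ℂ) *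
        ((cnormSq ((Matrix.diagonal (fun j => ((‖γ j‖ ^ 2 : ℝ) : ℂ))).mulVec
              (B.mulVec uhat)) : ℂ) /
          (cnormSq ((Matrix.diagonal (fun j => ((‖γ j‖ : ℝ) : ℂ))).mulVec
              (B.mulVec uhat)) : ℂ)) *
        (B.trace / ((Matrix.diagonal (fun j => ((‖γ j‖ ^ 2 : ℝ) : ℂ))) * B).trace) := by
  have hU : Fm ∈ unitaryGroup (Fin n) ℂ := mem_unitaryGroup_iff.mpr hF1
  have hTT := conjTranspose_mul_self_conj_diagonal hU γ
  rw [← hT] at hTT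
  have hres : ∀ j, 1 + (lam : ℂ) * ((‖γ j‖ ^ 2 : ℝ) : ℂ) ≠ 0 := fun j => by
    exact_mod_cast (by positivity : (0 : ℝ) < 1 + lam * ‖γ j‖ ^ 2).ne'
  set d : Fin n → ℂ := fun j => ((‖γ j‖ ^ 2 : ℝ) : ℂ)
  have hsum := sum_inv_one_add_smul_add_mul_sum hres
  rw [Fintype.card_fin] at hsum
  rw [inv_one_add_smul_diagonal hres] at hB
  set b : Fin n → ℂ := (1 + (lam : ℂ) • d)⁻¹
  have hHinv : H⁻¹ = Fmᴴ * B * Fm := by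
    rw [hH, hTT, inv_one_add_smul_conj_diagonal hU hres, hB]
  have hutilde : utilde = Fmᴴ *ᵥ uhat := by
    rw [huhat, conjTranspose_mulVec_mulVec_self hU]
  have hustar' : ustar = Fmᴴ *ᵥ (b * uhat) := by
    rw [hustar, hHinv, hutilde, conj_mulVec_conjTranspose_mulVec hU, hB, diagonal_mulVec_eq_mul]
  have hresidual : cnormSq (ustar - utilde) = lam ^ 2 * cnormSq (d * (b * uhat)) := by
    rw [hustar', hutilde, ← mulVec_sub, inv_one_add_smul_mul_sub_self hres,
      cnormSq_conjTranspose_mulVec hU, cnormSq_smul, norm_neg, Complex.norm_real,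
      Real.norm_eq_abs, sq_abs]
  have hdenominator : (n : ℂ) - H⁻¹.trace = lam * (diagonal d * B).trace := by
    rw [hHinv, trace_conj hU, hB, diagonal_mul_diagonal, trace_diagonal, trace_diagonal]
    linear_combination -hsum
  have hnumerator : (n : ℂ) - lam * (H⁻¹ * (Tᴴ * T)).trace = B.trace := by
    rw [hHinv, hTT, conj_mul_conj hU, trace_conj hU, hB, diagonal_mul_diagonal, trace_diagonal,
      trace_diagonal]
    simp only [mul_comm (b _)]
    linear_combination -hsum
  rw [hresidual, hdenominator, hnumerator, hustar', hT, conj_mulVec_conjTranspose_mulVec hU,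
    cnormSq_conjTranspose_mulVec hU, hB]
  simp only [diagonal_mulVec_eq_mul, cnormSq_ofReal_norm_mul]
  have hlam0 : (lam : ℂ) ≠ 0 := by exact_mod_cast hlam.ne'
  push_cast
  field_simp

/-- in the denoising case (`A = C = I`) with circulant `T = F⁻¹ΛF`,
`H = I + λTᴴT` and `u* = H⁻¹ũ`, the Algorithm 2 update
`[‖u* − ũ‖²/(n − trace(H⁻¹))]·[(n − λ trace(H⁻¹TᴴT))/‖Tu*‖²]` equals
`f(λ) = λ·(‖|Λ|²B(λ)û‖²/‖|Λ|B(λ)û‖²)·(trace B(λ)/trace(|Λ|²B(λ)))` with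
`B(λ) = (I + λ|Λ|²)⁻¹`, `û = Fũ`. -/
theorem algorithm2_fixed_point_closed_form
    (n : ℕ) (hn : 0 < n) (lam : ℝ) (hlam : 0 < lam)
    (Fm : Matrix (Fin n) (Fin n) ℂ) (hF1 : Fm * Fmᴴ = 1) (hF2 : Fmᴴ * Fm = 1)
    (γ : Fin n → ℂ)
    (T : Matrix (Fin n) (Fin n) ℂ)
    (hT : T = Fmᴴ * Matrix.diagonal γ * Fm)
    (utilde : Fin n → ℂ)
    (H : Matrix (Fin n) (Fin n) ℂ) (hH : H = 1 + (lam : ℂ) • (Tᴴ * T))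
    (ustar : Fin n → ℂ) (hustar : ustar = H⁻¹.mulVec utilde)
    (uhat : Fin n → ℂ) (huhat : uhat = Fm.mulVec utilde)
    (B : Matrix (Fin n) (Fin n) ℂ)
    (hB : B = (1 + (lam : ℂ) •
        Matrix.diagonal (fun j => ((‖γ j‖ ^ 2 : ℝ) : ℂ)))⁻¹)
    (hden1 : (n : ℂ) - H⁻¹.trace ≠ 0)
    (hden2 : cnormSq (T.mulVec ustar) ≠ 0)
    (hden3 : cnormSq
      ((Matrix.diagonal (fun j => ((‖γ j‖ : ℝ) : ℂ))).mulVec (B.mulVec uhat)) ≠ 0)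
    (hden4 : ((Matrix.diagonal (fun j => ((‖γ j‖ ^ 2 : ℝ) : ℂ))) * B).trace ≠ 0) :
    ((cnormSq (ustar - utilde) : ℂ) / ((n : ℂ) - H⁻¹.trace)) *
        (((n : ℂ) - (lam : ℂ) * (H⁻¹ * (Tᴴ * T)).trace) / (cnormSq (T.mulVec ustar) : ℂ))
      = (lam : ℂ) *
        ((cnormSq ((Matrix.diagonal (fun j => ((‖γ j‖ ^ 2 : ℝ) : ℂ))).mulVec
              (B.mulVec uhat)) : ℂ) /
          (cnormSq ((Matrix.diagonal (fun j => ((‖γ j‖ : ℝ) : ℂ))).mulVec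
              (B.mulVec uhat)) : ℂ)) *
        (B.trace / ((Matrix.diagonal (fun j => ((‖γ j‖ ^ 2 : ℝ) : ℂ))) * B).trace) :=
  algorithm2_fixed_point_closed_form_general n lam hlam Fm hF1 γ T hT utilde H hH ustar hustar uhat
    huhat B hB
end

section
/- For T = T_r with r > 0 (so γ₀ = 0 and γ_j ≠ 0 for 1 ≤ j ≤ n−1) and û with Σ_{j=1}^{n−1}|û_j|² ≠ 0, the fixed point function satisfies lim_{λ→∞} f(λ)/λ² = κ_∞(ũ, T_r) where κ_∞(ũ, T_r) = (Σ_{j=1}^{n−1}|û_j|²) / ((n−1)·Σ_{j=1}^{n−1}|û_j|²/|γ_j|²). -/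
/-!
For `c > 0`, `λc / (1 + λc) → 1` as `λ → ∞`. Hence, summing over the positive eigenvalues,
`λ² ∑ a²w / (1 + λa)² → ∑ w`, `λ² ∑ aw / (1 + λa)² → ∑ w / a`, `∑ (1 + λa)⁻¹ → 0` and
`λ ∑ a / (1 + λa) → n - 1`, while the single zero eigenvalue contributes only a `1` to
`∑ (1 + λa)⁻¹`. As `f(λ)/λ²` is a quotient of these four scaled sums, the limit follows.
-/

open Filter Finset Topology

lemma Real.sin_pi_mul_div_pos {j n : ℕ} (hj : 0 < j) (hjn : j < n) :
    0 < Real.sin (Real.pi * j / n) := by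
  have hn : (0 : ℝ) < n := by exact_mod_cast hj.trans hjn
  refine Real.sin_pos_of_pos_of_lt_pi (by positivity) ?_
  rw [div_lt_iff₀ hn]
  exact mul_lt_mul_of_pos_left (by exact_mod_cast hjn) Real.pi_pos

lemma tendsto_inv_one_add_mul_atTop {c : ℝ} (hc : 0 < c) :
    Tendsto (fun l : ℝ => (1 + l * c)⁻¹) atTop (𝓝 0) :=
  tendsto_inv_atTop_zero.comp <|
    tendsto_atTop_add_const_left _ 1 (tendsto_id.atTop_mul_const hc)

lemma tendsto_mul_div_one_add_mul_atTop {c : ℝ} (hc : 0 < c) :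
    Tendsto (fun l : ℝ => l * c / (1 + l * c)) atTop (𝓝 1) := by
  have h := (tendsto_inv_one_add_mul_atTop hc).const_sub 1
  rw [sub_zero] at h
  refine h.congr' ?_
  filter_upwards [eventually_ge_atTop 0] with l hl
  have : 1 + l * c ≠ 0 := by positivity
  field_simp
  ring

section FiniteSums

variable {ι : Type*} {s : Finset ι} {a : ι → ℝ}

lemma Finset.sum_div_ne_zero_of_nonneg {w : ι → ℝ} (hw : ∀ j ∈ s, 0 ≤ w j)
    (ha : ∀ j ∈ s, 0 < a j) (h : ∑ j ∈ s, w j ≠ 0) : ∑ j ∈ s, w j / a j ≠ 0 := by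
  contrapose! h
  rw [sum_eq_zero_iff_of_nonneg fun j hj => div_nonneg (hw j hj) (ha j hj).le] at h
  exact sum_eq_zero fun j hj => by simpa [(ha j hj).ne'] using h j hj

lemma tendsto_sq_mul_sum_sq_mul_div_one_add_mul_sq (b : ι → ℝ) (ha : ∀ j ∈ s, 0 < a j) :
    Tendsto (fun l : ℝ => l ^ 2 * ∑ j ∈ s, a j ^ 2 * b j / (1 + l * a j) ^ 2) atTop
      (𝓝 (∑ j ∈ s, b j)) := by
  simp_rw [mul_sum]
  refine tendsto_finsetSum _ fun j hj => ?_
  have h := ((tendsto_mul_div_one_add_mul_atTop (ha j hj)).pow 2).const_mul (b j)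
  rw [one_pow, mul_one] at h
  refine h.congr fun l => ?_
  rw [div_pow]
  ring

lemma tendsto_sq_mul_sum_mul_div_one_add_mul_sq (w : ι → ℝ) (ha : ∀ j ∈ s, 0 < a j) :
    Tendsto (fun l : ℝ => l ^ 2 * ∑ j ∈ s, a j * w j / (1 + l * a j) ^ 2) atTop
      (𝓝 (∑ j ∈ s, w j / a j)) := by
  refine (tendsto_sq_mul_sum_sq_mul_div_one_add_mul_sq (fun j => w j / a j) ha).congr
    fun l => congrArg _ (sum_congr rfl fun j hj => ?_)
  have := (ha j hj).ne'
  field_simp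

lemma tendsto_sum_inv_one_add_mul (ha : ∀ j ∈ s, 0 < a j) :
    Tendsto (fun l : ℝ => ∑ j ∈ s, (1 + l * a j)⁻¹) atTop (𝓝 0) := by
  simpa using tendsto_finsetSum s fun j hj => tendsto_inv_one_add_mul_atTop (ha j hj)

lemma tendsto_mul_sum_div_one_add_mul (ha : ∀ j ∈ s, 0 < a j) :
    Tendsto (fun l : ℝ => l * ∑ j ∈ s, a j / (1 + l * a j)) atTop (𝓝 (#s : ℝ)) := by
  simp_rw [mul_sum, ← mul_div_assoc]
  simpa using tendsto_finsetSum s fun j hj => tendsto_mul_div_one_add_mul_atTop (ha j hj)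

end FiniteSums

section FixedPointFun

variable {ι : Type*} [Fintype ι]

/-- The fixed point function `f` written in the eigenbasis of `T`: `a j = |γ_j|²`, `w j = |û_j|²`. -/
noncomputable def fixedPointFun (a w : ι → ℝ) (l : ℝ) : ℝ :=
  l * ((∑ j, a j ^ 2 * w j / (1 + l * a j) ^ 2) / (∑ j, a j * w j / (1 + l * a j) ^ 2)) *
    ((∑ j, (1 + l * a j)⁻¹) / (∑ j, a j / (1 + l * a j)))

lemma fixedPointFun_div_sq (a w : ι → ℝ) {l : ℝ} (hl : l ≠ 0) :
    fixedPointFun a w l / l ^ 2 =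
      (l ^ 2 * ∑ j, a j ^ 2 * w j / (1 + l * a j) ^ 2) /
          (l ^ 2 * ∑ j, a j * w j / (1 + l * a j) ^ 2) *
        ((∑ j, (1 + l * a j)⁻¹) / (l * ∑ j, a j / (1 + l * a j))) := by
  rw [fixedPointFun, mul_div_mul_left _ _ (pow_ne_zero 2 hl)]
  generalize ∑ j, a j ^ 2 * w j / (1 + l * a j) ^ 2 = A
  generalize ∑ j, a j * w j / (1 + l * a j) ^ 2 = B
  generalize ∑ j, (1 + l * a j)⁻¹ = C
  generalize ∑ j, a j / (1 + l * a j) = D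
  field_simp

theorem tendsto_fixedPointFun_div_sq [DecidableEq ι] {a : ι → ℝ} (w : ι → ℝ) {i₀ : ι}
    (ha₀ : a i₀ = 0) (ha : ∀ j ≠ i₀, 0 < a j) (hV : ∑ j ∈ univ.erase i₀, w j / a j ≠ 0) :
    Tendsto (fun l => fixedPointFun a w l / l ^ 2) atTop
      (𝓝 ((∑ j ∈ univ.erase i₀, w j) /
        (#(univ.erase i₀) * ∑ j ∈ univ.erase i₀, w j / a j))) := by
  set s := univ.erase i₀
  have has : ∀ j ∈ s, 0 < a j := fun j hj => ha j (ne_of_mem_erase hj)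
  have hs : (#s : ℝ) ≠ 0 := by
    obtain ⟨j, hj, -⟩ := exists_ne_zero_of_sum_ne_zero hV
    exact Nat.cast_ne_zero.2 (card_ne_zero_of_mem hj)
  have hsplit (g : ι → ℝ) : ∑ j, g j = g i₀ + ∑ j ∈ s, g j :=
    (add_sum_erase _ _ (mem_univ _)).symm
  have h := ((tendsto_sq_mul_sum_sq_mul_div_one_add_mul_sq w has).div
      (tendsto_sq_mul_sum_mul_div_one_add_mul_sq w has) hV).mul
    (((tendsto_sum_inv_one_add_mul has).const_add 1).div (tendsto_mul_sum_div_one_add_mul has)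
      (by simpa using hs))
  rw [add_zero, div_mul_div_comm, mul_one, mul_comm _ (#s : ℝ)] at h
  refine h.congr' ?_
  filter_upwards [eventually_ne_atTop 0] with l hl
  simp only [fixedPointFun_div_sq a w hl, hsplit, ha₀, Pi.div_apply, mul_zero, add_zero, zero_add,
    zero_div, zero_mul, ne_eq, OfNat.ofNat_ne_zero, not_false_eq_true, zero_pow, inv_one]

end FixedPointFun

theorem fixed_point_asymptotics_general
    (n r : ℕ) [NeZero n] (hr : 0 < r)
    (uhat : Fin n → ℂ)
    (a w : Fin n → ℝ)
    (ha : ∀ j : Fin n, a j = 4 ^ r * Real.sin (Real.pi * (j : ℕ) / n) ^ (2 * r))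
    (hw : ∀ j, w j = ‖uhat j‖ ^ 2)
    (hwsum : ∑ j ∈ Finset.univ.erase (0 : Fin n), w j ≠ 0)
    (f : ℝ → ℝ)
    (hf : ∀ lam : ℝ, f lam =
      lam * ((∑ j, (a j) ^ 2 * w j / (1 + lam * a j) ^ 2) /
          (∑ j, a j * w j / (1 + lam * a j) ^ 2)) *
        ((∑ j, (1 + lam * a j)⁻¹) / (∑ j, a j / (1 + lam * a j)))) :
    Tendsto (fun lam => f lam / lam ^ 2) atTop
      (nhds ((∑ j ∈ Finset.univ.erase (0 : Fin n), w j) /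
        (((n : ℝ) - 1) * ∑ j ∈ Finset.univ.erase (0 : Fin n), w j / a j))) := by
  have ha₀ : a 0 = 0 := by simp [ha, hr.ne']
  have hapos (j : Fin n) (hj : j ≠ 0) : 0 < a j := by
    have := Real.sin_pi_mul_div_pos (Nat.pos_of_ne_zero (Fin.val_ne_zero_iff.2 hj)) j.isLt
    rw [ha]
    positivity
  have hV := sum_div_ne_zero_of_nonneg (fun j _ => by rw [hw]; positivity)
    (fun j hj => hapos j (ne_of_mem_erase hj)) hwsum
  have hcard : (#(univ.erase (0 : Fin n)) : ℝ) = n - 1 := by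
    rw [card_erase_of_mem (mem_univ _), card_univ, Fintype.card_fin,
      Nat.cast_pred (Nat.pos_of_neZero n)]
  rw [← hcard, show f = fixedPointFun a w from funext hf]
  exact tendsto_fixedPointFun_div_sq w ha₀ hapos hV

/-- for `T = T_r` with `r > 0` (so `γ₀ = 0`, `|γ_j|² = 4^r sin^{2r}(πj/n) > 0`
for `1 ≤ j ≤ n−1`) and `Σ_{j≠0}|û_j|² ≠ 0`, the fixed point function satisfies
`lim_{λ→∞} f(λ)/λ² = κ_∞ = (Σ_{j≠0}|û_j|²)/((n−1)·Σ_{j≠0}|û_j|²/|γ_j|²)`. -/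
theorem fixed_point_asymptotics
    (n r : ℕ) [NeZero n] (hn : 2 ≤ n) (hr : 0 < r)
    (uhat : Fin n → ℂ)
    (a w : Fin n → ℝ)
    (ha : ∀ j : Fin n, a j = 4 ^ r * Real.sin (Real.pi * (j : ℕ) / n) ^ (2 * r))
    (hw : ∀ j, w j = ‖uhat j‖ ^ 2)
    (hwsum : ∑ j ∈ Finset.univ.erase (0 : Fin n), w j ≠ 0)
    (f : ℝ → ℝ)
    (hf : ∀ lam : ℝ, f lam =
      lam * ((∑ j, (a j) ^ 2 * w j / (1 + lam * a j) ^ 2) /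
          (∑ j, a j * w j / (1 + lam * a j) ^ 2)) *
        ((∑ j, (1 + lam * a j)⁻¹) / (∑ j, a j / (1 + lam * a j)))) :
    Tendsto (fun lam => f lam / lam ^ 2) atTop
      (nhds ((∑ j ∈ Finset.univ.erase (0 : Fin n), w j) /
        (((n : ℝ) - 1) * ∑ j ∈ Finset.univ.erase (0 : Fin n), w j / a j))) :=
  fixed_point_asymptotics_general n r hr uhat a w ha hw hwsum f hf
end

section
/- Let σ, η > 0 and define p(b | σ, η) = ∫_{ℝⁿ} (2πσ²)^{−m/2} exp(−‖Au − b‖²/(2σ²)) · (2πη²)^{−n/2} det(T) exp(−‖Tu‖²/(2η²)) du for invertible T. Then ∂p/∂σ (b|σ,η) = (−m/σ)p(b|σ,η) + σ⁻³ p(b|σ,η)·E[‖AU − b‖² | b], so any maximizer in σ satisfies σ² = (1/m)E[‖AU − b‖² | b], where the conditional expectation is with respect to the posterior density proportional to exp(−‖Au−b‖²/(2σ²) − ‖Tu‖²/(2η²)). -/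
/-!
Write `p s = (2πs²)^(-m/2) · C · J s` with `J s = ∫ exp (-Q u / (2s²) - V u)`, where `Q` is the
residual `‖Au - b‖²` and `exp (-V)` the unnormalised prior. The prefactor has logarithmic
derivative `-m/σ`, and differentiating under the integral sign gives `J' σ = σ⁻³ ∫ Q exp (…)`,
which is `σ⁻³ · J σ · E`. Differentiation under the integral is legitimate because
`y e^{-y} ≤ 1` bounds `Q / x³ · exp (-Q / (2x²))` by `2 / x`, so the prior weight alone
dominates, and it is integrable since `u ↦ Tu` is an invertible linear change of variables
from a standard Gaussian. At a maximum the derivative vanishes, and `p σ ≠ 0` leaves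
`σ² = E / m`.
-/

open Matrix MeasureTheory Real

theorem integrable_exp_neg_sum_sq_div {ι : Type*} [Fintype ι] {c : ℝ} (hc : 0 < c) :
    Integrable (fun v : ι → ℝ => exp (-(∑ i, v i ^ 2) / c)) := by
  have hprod : (fun v : ι → ℝ => exp (-(∑ i, v i ^ 2) / c))
      = fun v => ∏ i, exp (-c⁻¹ * v i ^ 2) := by
    funext v
    rw [← exp_sum, neg_div, div_eq_inv_mul, Finset.mul_sum, ← Finset.sum_neg_distrib]
    simp only [neg_mul]
  rw [hprod]
  exact Integrable.fintype_prod fun _ => integrable_exp_neg_mul_sq (inv_pos.mpr hc)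

theorem MeasureTheory.Integrable.comp_mulVec {ι E : Type*} [Fintype ι] [DecidableEq ι]
    [NormedAddCommGroup E]
    {T : Matrix ι ι ℝ} (hT : T.det ≠ 0) {g : (ι → ℝ) → E} (hg : Integrable g) :
    Integrable fun u => g (T *ᵥ u) := by
  have hmap := Measure.map_linearMap_addHaar_eq_smul_addHaar volume
    (f := Matrix.toLin' T) (by rwa [LinearMap.det_toLin'])
  have hg' : Integrable g (Measure.map (Matrix.toLin' T) volume) := by
    rw [hmap]
    exact hg.smul_measure ENNReal.ofReal_ne_top
  exact hg'.comp_measurable (Matrix.toLin' T).continuous_of_finiteDimensional.measurable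

theorem hasDerivAt_mul_sq_rpow {c r x : ℝ} (hc : 0 < c) (hx : x ≠ 0) :
    HasDerivAt (fun s => (c * s ^ 2) ^ r) (2 * r / x * (c * x ^ 2) ^ r) x := by
  have hbase : HasDerivAt (fun s => c * s ^ 2) (c * (2 * x)) x := by
    simpa using (hasDerivAt_pow 2 x).const_mul c
  have hpos : 0 < c * x ^ 2 := by positivity
  convert hbase.rpow_const (p := r) (Or.inl hpos.ne') using 1
  rw [rpow_sub_one hpos.ne']
  field_simp

theorem hasDerivAt_exp_neg_div_two_sq_sub (q v : ℝ) {x : ℝ} (hx : x ≠ 0) :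
    HasDerivAt (fun s => exp (-q / (2 * s ^ 2) - v))
      (q / x ^ 3 * exp (-q / (2 * x ^ 2) - v)) x := by
  have hinv : HasDerivAt (fun s : ℝ => (s ^ 2)⁻¹) (-(2 * x) / (x ^ 2) ^ 2) x := by
    simpa using (hasDerivAt_pow 2 x).fun_inv (pow_ne_zero 2 hx)
  have harg : HasDerivAt (fun s => -q / 2 * (s ^ 2)⁻¹ - v)
      (-q / 2 * (-(2 * x) / (x ^ 2) ^ 2)) x :=
    (hinv.const_mul _).sub_const v
  convert harg.exp using 1
  · funext s
    congr 1
    ring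
  · field_simp

theorem div_cube_mul_exp_neg_div_two_sq_sub_le (q v : ℝ) {x : ℝ} (hx : 0 < x) :
    q / x ^ 3 * exp (-q / (2 * x ^ 2) - v) ≤ 2 / x * exp (-v) := by
  have hsplit : q / x ^ 3 * exp (-q / (2 * x ^ 2) - v)
      = 2 / x * (q / (2 * x ^ 2) * exp (-(q / (2 * x ^ 2)))) * exp (-v) := by
    rw [sub_eq_add_neg, exp_add, neg_div]
    field_simp
  have hy : q / (2 * x ^ 2) * exp (-(q / (2 * x ^ 2))) ≤ 1 :=
    (mul_exp_neg_le_exp_neg_one _).trans (exp_le_one_iff.mpr (by norm_num))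
  rw [hsplit]
  gcongr
  exact mul_le_of_le_one_right (by positivity) hy

theorem sq_eq_div_of_neg_div_mul_add_mul_eq_zero {m σ P E : ℝ} (hm : m ≠ 0) (hσ : σ ≠ 0)
    (hP : P ≠ 0) (h : -m / σ * P + (σ ^ 3)⁻¹ * P * E = 0) : σ ^ 2 = E / m := by
  have hfactor : P * (E - m * σ ^ 2) = 0 := by
    field_simp at h
    linarith
  rw [eq_div_iff hm]
  linarith [(mul_eq_zero.mp hfactor).resolve_left hP]

section PosteriorWeight

variable {α : Type*} [MeasurableSpace α] {μ : Measure α} {Q V : α → ℝ}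

theorem integrable_exp_neg_div_two_sq_sub (hQ : ∀ u, 0 ≤ Q u) (hQm : AEMeasurable Q μ)
    (hVm : AEMeasurable V μ) (hV : Integrable (fun u => exp (-V u)) μ) (s : ℝ) :
    Integrable (fun u => exp (-Q u / (2 * s ^ 2) - V u)) μ := by
  refine hV.mono' ((hQm.neg.div_const _).sub hVm).exp.aestronglyMeasurable
    (Filter.Eventually.of_forall fun u => ?_)
  rw [norm_of_nonneg (exp_nonneg _), exp_le_exp, sub_le_iff_le_add, neg_add_cancel]
  exact div_nonpos_of_nonpos_of_nonneg (neg_nonpos.mpr (hQ u)) (by positivity)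

theorem hasDerivAt_integral_exp_neg_div_two_sq_sub (hQ : ∀ u, 0 ≤ Q u)
    (hQm : AEMeasurable Q μ) (hVm : AEMeasurable V μ)
    (hV : Integrable (fun u => exp (-V u)) μ) {σ : ℝ} (hσ : 0 < σ) :
    HasDerivAt (fun s => ∫ u, exp (-Q u / (2 * s ^ 2) - V u) ∂μ)
      ((σ ^ 3)⁻¹ * ∫ u, Q u * exp (-Q u / (2 * σ ^ 2) - V u) ∂μ) σ := by
  have hball : ∀ x ∈ Metric.ball σ (σ / 2), σ / 2 < x := fun x hx => by
    rw [Metric.mem_ball, Real.dist_eq, abs_lt] at hx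
    linarith
  have h_bound : ∀ᵐ u ∂μ, ∀ x ∈ Metric.ball σ (σ / 2),
      ‖Q u / x ^ 3 * exp (-Q u / (2 * x ^ 2) - V u)‖ ≤ 4 / σ * exp (-V u) := by
    refine Filter.Eventually.of_forall fun u x hx => ?_
    have hx0 : 0 < x := (half_pos hσ).trans (hball x hx)
    rw [norm_of_nonneg (by have := hQ u; positivity)]
    refine (div_cube_mul_exp_neg_div_two_sq_sub_le (Q u) (V u) hx0).trans
      (mul_le_mul_of_nonneg_right ?_ (exp_nonneg _))
    rw [div_le_div_iff₀ hx0 hσ]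
    linarith [hball x hx]
  have h_diff : ∀ᵐ u ∂μ, ∀ x ∈ Metric.ball σ (σ / 2), HasDerivAt
      (fun s => exp (-Q u / (2 * s ^ 2) - V u)) (Q u / x ^ 3 * exp (-Q u / (2 * x ^ 2) - V u)) x :=
    Filter.Eventually.of_forall fun u x hx =>
      hasDerivAt_exp_neg_div_two_sq_sub _ _ ((half_pos hσ).trans (hball x hx)).ne'
  have hF'm : AEStronglyMeasurable (fun u => Q u / σ ^ 3 * exp (-Q u / (2 * σ ^ 2) - V u)) μ :=
    ((hQm.div_const _).mul ((hQm.neg.div_const _).sub hVm).exp).aestronglyMeasurable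
  have hderiv := (hasDerivAt_integral_of_dominated_loc_of_deriv_le
    (Metric.ball_mem_nhds σ (half_pos hσ))
    (Filter.Eventually.of_forall fun s =>
      (integrable_exp_neg_div_two_sq_sub hQ hQm hVm hV s).aestronglyMeasurable)
    (integrable_exp_neg_div_two_sq_sub hQ hQm hVm hV σ) hF'm h_bound
    (hV.const_mul _) h_diff).2
  have hvalue : (σ ^ 3)⁻¹ * ∫ u, Q u * exp (-Q u / (2 * σ ^ 2) - V u) ∂μ
      = ∫ u, Q u / σ ^ 3 * exp (-Q u / (2 * σ ^ 2) - V u) ∂μ := by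
    rw [← integral_const_mul]
    congr 1 with u
    ring
  rwa [hvalue]

end PosteriorWeight

/-- for the marginal likelihood
`p(b|σ,η) = ∫ (2πσ²)^{−m/2} e^{−‖Au−b‖²/(2σ²)} (2πη²)^{−n/2} det(T) e^{−‖Tu‖²/(2η²)} du`
(`T` invertible), the derivative in `σ` is
`∂p/∂σ = (−m/σ)p + σ⁻³ p E[‖AU−b‖² | b]`, where the conditional expectation is taken with
respect to the posterior density `∝ exp(−‖Au−b‖²/(2σ²) − ‖Tu‖²/(2η²))`; hence any
maximizer in `σ > 0` satisfies `σ² = (1/m)E[‖AU−b‖² | b]`. -/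
theorem marginal_likelihood_sigma_stationarity
    (m n : ℕ) (hm : 0 < m)
    (A : Matrix (Fin m) (Fin n) ℝ) (T : Matrix (Fin n) (Fin n) ℝ)
    (hT : IsUnit T.det)
    (b : Fin m → ℝ) (η : ℝ) (hη : 0 < η) (σ : ℝ) (hσ : 0 < σ)
    (p : ℝ → ℝ)
    (hp : ∀ s : ℝ, p s =
      ∫ u : Fin n → ℝ,
        (2 * Real.pi * s ^ 2) ^ (-(m : ℝ) / 2) *
          Real.exp (-(∑ i, (A.mulVec u - b) i ^ 2) / (2 * s ^ 2)) *
          ((2 * Real.pi * η ^ 2) ^ (-(n : ℝ) / 2) * T.det *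
            Real.exp (-(∑ i, (T.mulVec u) i ^ 2) / (2 * η ^ 2))))
    (E : ℝ)
    (hE : E =
      (∫ u : Fin n → ℝ, (∑ i, (A.mulVec u - b) i ^ 2) *
          Real.exp (-(∑ i, (A.mulVec u - b) i ^ 2) / (2 * σ ^ 2)
            - (∑ i, (T.mulVec u) i ^ 2) / (2 * η ^ 2))) /
      (∫ u : Fin n → ℝ,
          Real.exp (-(∑ i, (A.mulVec u - b) i ^ 2) / (2 * σ ^ 2)
            - (∑ i, (T.mulVec u) i ^ 2) / (2 * η ^ 2)))) :
    HasDerivAt p (-(m : ℝ) / σ * p σ + (σ ^ 3)⁻¹ * p σ * E) σ ∧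
    ((∀ s : ℝ, 0 < s → p s ≤ p σ) → σ ^ 2 = E / m) := by
  set Q : (Fin n → ℝ) → ℝ := fun u => ∑ i, (A *ᵥ u - b) i ^ 2
  set V : (Fin n → ℝ) → ℝ := fun u => (∑ i, (T *ᵥ u) i ^ 2) / (2 * η ^ 2)
  set J : ℝ → ℝ := fun s => ∫ u, exp (-Q u / (2 * s ^ 2) - V u)
  set C : ℝ := (2 * π * η ^ 2) ^ (-(n : ℝ) / 2) * T.det
  have hQ : ∀ u, 0 ≤ Q u := fun u => by positivity
  have hQm : AEMeasurable Q := by fun_prop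
  have hVm : AEMeasurable V := by fun_prop
  have hV : Integrable fun u => exp (-V u) := by
    simpa only [V, neg_div] using
      (integrable_exp_neg_sum_sq_div (by positivity : 0 < 2 * η ^ 2)).comp_mulVec hT.ne_zero
  set K : ℝ := ∫ u, Q u * exp (-Q u / (2 * σ ^ 2) - V u)
  have hEK : E = K / J σ := hE
  have hJ : HasDerivAt J ((σ ^ 3)⁻¹ * K) σ :=
    hasDerivAt_integral_exp_neg_div_two_sq_sub hQ hQm hVm hV hσ
  have hJσ : 0 < J σ :=
    integral_exp_pos (integrable_exp_neg_div_two_sq_sub hQ hQm hVm hV σ)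
  have hp_eq : p = fun s => (2 * π * s ^ 2) ^ (-(m : ℝ) / 2) * (C * J s) := by
    funext s
    rw [hp s, ← integral_const_mul, ← integral_const_mul]
    congr 1 with u
    simp only [Q, V, exp_sub, neg_div (2 * η ^ 2), exp_neg]
    ring
  have hpσ : p σ ≠ 0 := by
    rw [hp_eq]
    exact mul_ne_zero (by positivity)
      (mul_ne_zero (mul_ne_zero (by positivity) hT.ne_zero) hJσ.ne')
  have hderiv : HasDerivAt p (-(m : ℝ) / σ * p σ + (σ ^ 3)⁻¹ * p σ * E) σ := by
    rw [hp_eq]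
    refine ((hasDerivAt_mul_sq_rpow two_pi_pos hσ.ne').mul (hJ.const_mul C)).congr_deriv ?_
    rw [hEK]
    field_simp
  refine ⟨hderiv, fun hmax => ?_⟩
  have hzero := IsLocalMax.hasDerivAt_eq_zero
    ((eventually_gt_nhds hσ).mono fun s hs => hmax s hs) hderiv
  exact sq_eq_div_of_neg_div_mul_add_mul_eq_zero (Nat.cast_ne_zero.mpr hm.ne') hσ.ne' hpσ hzero
end

section
/- Let b ∈ ℝ^m, A ∈ ℝ^{m×n}, T invertible, σ, η > 0, λ = σ²/η², and H = AᵀA + λTᵀT positive definite. If (σ, η) maximizes the marginal likelihood p(b|σ,η) of the Gaussian model, then σ² = ‖Au_λ − b‖₂² / (m − trace(H⁻¹AᵀA)) and η² = ‖Tu_λ‖₂² / (n − λ·trace(H⁻¹TᵀT)), where u_λ = H⁻¹Aᵀb, provided the denominators are nonzero. -/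
/-!
Write `x = σ²` and `λ = σ²/η²`. Completing the square,
`‖Au - b‖² + λ‖Tu‖² = (u - u_λ)ᵀ H_λ (u - u_λ) + R(λ)` where `R(λ)` is the minimum of the
Tikhonov functional, so the Gaussian integral over `u` gives `p = det T · exp ℓ(x, λ)` with
`ℓ(x, λ) = -(m/2) log (2πx) + (n/2) log λ - ½ log det H_λ - R(λ)/(2x)`.
At a maximum of `p` both partial derivatives of `ℓ` vanish: `∂ₓℓ = 0` says `R(λ) = m x`, and by
Jacobi's formula `(log det H_λ)' = tr(H_λ⁻¹TᵀT)` and the envelope identity `R'(λ) = ‖Tu_λ‖²`,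
`∂_λ ℓ = 0` says `x (n - λ tr(H_λ⁻¹TᵀT)) = λ‖Tu_λ‖²`. Combined with
`R(λ) = ‖Au_λ - b‖² + λ‖Tu_λ‖²` and `tr(H_λ⁻¹AᵀA) + λ tr(H_λ⁻¹TᵀT) = n`, these give both formulas.
-/

open Matrix MeasureTheory Real Filter Topology

lemma sum_sq_eq_dotProduct_self {ι R : Type*} [Fintype ι] [CommSemiring R] (v : ι → R) :
    ∑ i, v i ^ 2 = v ⬝ᵥ v := by
  simp only [dotProduct, sq]

lemma dotProduct_transpose_mul_self_mulVec {k n R : Type*} [Fintype k] [Fintype n]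
    [CommSemiring R] (B : Matrix k n R) (u v : n → R) :
    u ⬝ᵥ (Bᵀ * B) *ᵥ v = (B *ᵥ u) ⬝ᵥ (B *ᵥ v) := by
  rw [← mulVec_mulVec, dotProduct_mulVec, vecMul_transpose]

lemma hasDerivAt_of_sub_eq_mul {f g : ℝ → ℝ} {x₀ : ℝ} (hg : ContinuousAt g x₀)
    (hfg : ∀ᶠ x in 𝓝 x₀, f x - f x₀ = (x - x₀) * g x) :
    HasDerivAt f (g x₀) x₀ := by
  rw [hasDerivAt_iff_tendsto_slope]
  refine (hg.tendsto.mono_left nhdsWithin_le_nhds).congr' ?_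
  filter_upwards [nhdsWithin_le_nhds hfg, self_mem_nhdsWithin] with x hx hne
  rw [slope_def_field, hx, mul_div_cancel_left₀ _ (sub_ne_zero.mpr hne)]

lemma hasDerivAt_det_one_add_smul {𝕜 n : Type*} [NontriviallyNormedField 𝕜] [Fintype n]
    [DecidableEq n] (M : Matrix n n 𝕜) :
    HasDerivAt (fun t : 𝕜 => (1 + t • M).det) M.trace 0 := by
  have hP (t : 𝕜) : (1 + (Polynomial.X : Polynomial 𝕜) • M.map Polynomial.C).det.eval t
      = (1 + t • M).det := by
    rw [← Polynomial.coe_evalRingHom, RingHom.map_det]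
    congr 1
    ext i j
    by_cases h : i = j <;> simp [h, mul_comm t]
  have := (1 + (Polynomial.X : Polynomial 𝕜) • M.map Polynomial.C).det.hasDerivAt 0
  rwa [derivative_det_one_add_X_smul, funext hP] at this

lemma hasDerivAt_det_add_smul {𝕜 n : Type*} [NontriviallyNormedField 𝕜] [Fintype n]
    [DecidableEq n] (M K : Matrix n n 𝕜) {t₀ : 𝕜} (h : IsUnit (M + t₀ • K).det) :
    HasDerivAt (fun t : 𝕜 => (M + t • K).det)
      ((M + t₀ • K).det * ((M + t₀ • K)⁻¹ * K).trace) t₀ := by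
  have hfac (t : 𝕜) :
      M + t • K = (M + t₀ • K) * (1 + (t - t₀) • ((M + t₀ • K)⁻¹ * K)) := by
    rw [mul_add, mul_one, mul_smul_comm, ← Matrix.mul_assoc, mul_nonsing_inv _ h,
      Matrix.one_mul, sub_smul]
    abel
  rw [funext fun t => congrArg det (hfac t)]
  simp only [det_mul]
  have h0 : HasDerivAt (fun t : 𝕜 => (1 + t • ((M + t₀ • K)⁻¹ * K)).det)
      ((M + t₀ • K)⁻¹ * K).trace (t₀ - t₀) := by
    rw [sub_self]
    exact hasDerivAt_det_one_add_smul _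
  exact (h0.comp_sub_const t₀ t₀).const_mul _

lemma eq_zero_of_isLocalMax_mul_exp {f : ℝ → ℝ} {f' c x₀ : ℝ} (hc : c ≠ 0)
    (hf : HasDerivAt f f' x₀) (hmax : IsLocalMax (fun x => c * exp (f x)) x₀) : f' = 0 := by
  have := hmax.hasDerivAt_eq_zero (hf.exp.const_mul c)
  simpa [hc, (exp_pos _).ne'] using this

section Gaussian

variable {ι : Type*} [Fintype ι]

lemma integral_exp_neg_dotProduct_self_div {k : ℝ} (hk : 0 < k) :
    ∫ v : ι → ℝ, exp (-(v ⬝ᵥ v) / (2 * k)) = (2 * π * k) ^ ((Fintype.card ι : ℝ) / 2) := by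
  have hprod (v : ι → ℝ) :
      exp (-(v ⬝ᵥ v) / (2 * k)) = ∏ i, exp (-(2 * k)⁻¹ * v i ^ 2) := by
    rw [← exp_sum, dotProduct, neg_div, Finset.sum_div, ← Finset.sum_neg_distrib]
    simp only [sq]
    exact congrArg exp (Finset.sum_congr rfl fun i _ => by ring)
  simp_rw [hprod]
  rw [integral_fintype_prod_volume_eq_pow (fun x : ℝ => exp (-(2 * k)⁻¹ * x ^ 2)),
    integral_gaussian, div_inv_eq_mul, sqrt_eq_rpow, ← rpow_natCast,
    ← rpow_mul (by positivity)]
  ring_nf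

lemma integral_comp_mulVec [DecidableEq ι] {S : Matrix ι ι ℝ} (hS : S.det ≠ 0)
    {f : (ι → ℝ) → ℝ} (hf : Continuous f) :
    ∫ u, f (S *ᵥ u) = |S.det|⁻¹ * ∫ v, f v := by
  have hmap : ∫ u, f (S *ᵥ u) = ∫ v, f v ∂(Measure.map (toLin' S) volume) :=
    (integral_map (by fun_prop) hf.aestronglyMeasurable).symm
  rw [hmap, Real.map_matrix_volume_pi_eq_smul_volume_pi hS, integral_smul_measure,
    ENNReal.toReal_ofReal (abs_nonneg _), abs_inv, smul_eq_mul]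

open scoped MatrixOrder in
lemma integral_exp_neg_dotProduct_mulVec_div [DecidableEq ι] {M : Matrix ι ι ℝ}
    (hM : M.PosDef) {k : ℝ} (hk : 0 < k) :
    ∫ u : ι → ℝ, exp (-(u ⬝ᵥ M *ᵥ u) / (2 * k))
      = (2 * π * k) ^ ((Fintype.card ι : ℝ) / 2) / √M.det := by
  obtain ⟨B, rfl⟩ := CStarAlgebra.nonneg_iff_eq_star_mul_self.mp hM.posSemidef.nonneg
  have hdet : (star B * B).det = B.det ^ 2 := by
    rw [det_mul, star_eq_conjTranspose, det_conjTranspose, star_trivial, sq]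
  have hB : B.det ≠ 0 := fun h => hM.det_pos.ne' (by rw [hdet, h]; ring)
  simp_rw [star_eq_conjTranspose, conjTranspose_eq_transpose_of_trivial,
    dotProduct_transpose_mul_self_mulVec]
  rw [integral_comp_mulVec hB (f := fun v => exp (-(v ⬝ᵥ v) / (2 * k))) (by fun_prop),
    integral_exp_neg_dotProduct_self_div hk, ← conjTranspose_eq_transpose_of_trivial,
    ← star_eq_conjTranspose, hdet, sqrt_sq_eq_abs, inv_mul_eq_div]

end Gaussian

section Tikhonov

variable {m n : Type*} [Fintype m] [Fintype n]
  (A : Matrix m n ℝ) (T : Matrix n n ℝ) (b : m → ℝ)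

noncomputable def tikhonovMatrix (l : ℝ) : Matrix n n ℝ := Aᵀ * A + l • (Tᵀ * T)

lemma dotProduct_tikhonovMatrix_mulVec (l : ℝ) (u v : n → ℝ) :
    u ⬝ᵥ tikhonovMatrix A T l *ᵥ v
      = (A *ᵥ u) ⬝ᵥ (A *ᵥ v) + l * ((T *ᵥ u) ⬝ᵥ (T *ᵥ v)) := by
  rw [tikhonovMatrix, add_mulVec, dotProduct_add, smul_mulVec, dotProduct_smul, smul_eq_mul,
    dotProduct_transpose_mul_self_mulVec, dotProduct_transpose_mul_self_mulVec]

variable [DecidableEq n]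

lemma tikhonovMatrix_posDef (hT : IsUnit T.det) {l : ℝ} (hl : 0 < l) :
    (tikhonovMatrix A T l).PosDef := by
  have hTT : (Tᵀ * T).PosDef := by
    simpa [conjTranspose_eq_transpose_of_trivial] using
      PosDef.conjTranspose_mul_self T (mulVec_injective_iff_isUnit.mpr
        ((isUnit_iff_isUnit_det T).mpr hT))
  unfold tikhonovMatrix
  simpa [conjTranspose_eq_transpose_of_trivial] using
    PosDef.posSemidef_add (posSemidef_conjTranspose_mul_self A) (hTT.smul hl)

noncomputable def tikhonovSolution (l : ℝ) : n → ℝ :=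
  (tikhonovMatrix A T l)⁻¹ *ᵥ (Aᵀ *ᵥ b)

noncomputable def tikhonovMin (l : ℝ) : ℝ :=
  b ⬝ᵥ b - (Aᵀ *ᵥ b) ⬝ᵥ tikhonovSolution A T b l

lemma isUnit_det_tikhonovMatrix (hT : IsUnit T.det) {l : ℝ} (hl : 0 < l) :
    IsUnit (tikhonovMatrix A T l).det :=
  (tikhonovMatrix_posDef A T hT hl).det_pos.ne'.isUnit

lemma tikhonovMatrix_mulVec_tikhonovSolution (hT : IsUnit T.det) {l : ℝ} (hl : 0 < l) :
    tikhonovMatrix A T l *ᵥ tikhonovSolution A T b l = Aᵀ *ᵥ b := by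
  rw [tikhonovSolution, mulVec_mulVec,
    mul_nonsing_inv _ (isUnit_det_tikhonovMatrix A T hT hl), one_mulVec]

lemma dotProduct_tikhonovSolution (hT : IsUnit T.det) {l : ℝ} (hl : 0 < l) (u : n → ℝ) :
    u ⬝ᵥ tikhonovMatrix A T l *ᵥ tikhonovSolution A T b l = (A *ᵥ u) ⬝ᵥ b := by
  rw [tikhonovMatrix_mulVec_tikhonovSolution A T b hT hl, dotProduct_mulVec, vecMul_transpose,
    dotProduct_comm]

lemma tikhonov_complete_square (hT : IsUnit T.det) {l : ℝ} (hl : 0 < l) (u : n → ℝ) :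
    (A *ᵥ u - b) ⬝ᵥ (A *ᵥ u - b) + l * ((T *ᵥ u) ⬝ᵥ (T *ᵥ u))
      = (u - tikhonovSolution A T b l) ⬝ᵥ
          tikhonovMatrix A T l *ᵥ (u - tikhonovSolution A T b l) + tikhonovMin A T b l := by
  set w := tikhonovSolution A T b l
  have hu := dotProduct_tikhonovSolution A T b hT hl u
  have hw := dotProduct_tikhonovSolution A T b hT hl w
  have hβ : (Aᵀ *ᵥ b) ⬝ᵥ w = (A *ᵥ w) ⬝ᵥ b := by
    rw [dotProduct_comm, dotProduct_mulVec, vecMul_transpose]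
  simp only [dotProduct_tikhonovMatrix_mulVec] at hu hw
  rw [tikhonovMin, hβ]
  simp only [mulVec_sub, dotProduct_sub, sub_dotProduct, dotProduct_tikhonovMatrix_mulVec]
  simp only [dotProduct_comm] at hu hw ⊢
  linear_combination 2 * hu - hw

lemma tikhonovMin_eq (hT : IsUnit T.det) {l : ℝ} (hl : 0 < l) :
    tikhonovMin A T b l
      = (A *ᵥ tikhonovSolution A T b l - b) ⬝ᵥ (A *ᵥ tikhonovSolution A T b l - b)
        + l * ((T *ᵥ tikhonovSolution A T b l) ⬝ᵥ (T *ᵥ tikhonovSolution A T b l)) := by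
  rw [tikhonov_complete_square A T b hT hl, sub_self, zero_dotProduct, zero_add]

lemma trace_inv_tikhonovMatrix_mul_add (hT : IsUnit T.det) {l : ℝ} (hl : 0 < l) :
    ((tikhonovMatrix A T l)⁻¹ * (Aᵀ * A)).trace
        + l * ((tikhonovMatrix A T l)⁻¹ * (Tᵀ * T)).trace = Fintype.card n := by
  have h : trace ((tikhonovMatrix A T l)⁻¹ * tikhonovMatrix A T l)
      = trace (1 : Matrix n n ℝ) := by
    rw [nonsing_inv_mul _ (isUnit_det_tikhonovMatrix A T hT hl)]
  rwa [tikhonovMatrix, Matrix.mul_add, mul_smul_comm, trace_add, trace_smul, trace_one,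
    smul_eq_mul] at h

/- Uses `Aᵀb = H_l u_l = H_{l₀} u_{l₀}` and `H_l - H_{l₀} = (l - l₀) TᵀT`. -/
lemma tikhonovMin_sub (hT : IsUnit T.det) {l l₀ : ℝ} (hl : 0 < l) (hl₀ : 0 < l₀) :
    tikhonovMin A T b l - tikhonovMin A T b l₀
      = (l - l₀) * ((T *ᵥ tikhonovSolution A T b l) ⬝ᵥ (T *ᵥ tikhonovSolution A T b l₀)) := by
  set u := tikhonovSolution A T b l
  set u₀ := tikhonovSolution A T b l₀
  have h₁ : (Aᵀ *ᵥ b) ⬝ᵥ u₀ = u ⬝ᵥ tikhonovMatrix A T l *ᵥ u₀ := by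
    rw [← tikhonovMatrix_mulVec_tikhonovSolution A T b hT hl, dotProduct_comm,
      dotProduct_tikhonovMatrix_mulVec, dotProduct_tikhonovMatrix_mulVec,
      dotProduct_comm (A *ᵥ u₀), dotProduct_comm (T *ᵥ u₀)]
  have h₂ : (Aᵀ *ᵥ b) ⬝ᵥ u = u ⬝ᵥ tikhonovMatrix A T l₀ *ᵥ u₀ := by
    rw [← tikhonovMatrix_mulVec_tikhonovSolution A T b hT hl₀, dotProduct_comm]
  rw [tikhonovMin, tikhonovMin, h₁, h₂, dotProduct_tikhonovMatrix_mulVec,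
    dotProduct_tikhonovMatrix_mulVec]
  ring

lemma continuousAt_tikhonovSolution (hT : IsUnit T.det) {l₀ : ℝ} (hl₀ : 0 < l₀) :
    ContinuousAt (tikhonovSolution A T b) l₀ := by
  have hH : Continuous (tikhonovMatrix A T) := by
    unfold tikhonovMatrix
    fun_prop
  have hinv : ContinuousAt (fun l => (tikhonovMatrix A T l)⁻¹) l₀ :=
    (continuousAt_matrix_inv _ (NormedRing.inverse_continuousAt
      (isUnit_det_tikhonovMatrix A T hT hl₀).unit)).comp hH.continuousAt
  exact (continuous_id.matrix_mulVec continuous_const).continuousAt.comp hinv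

lemma hasDerivAt_tikhonovMin (hT : IsUnit T.det) {l₀ : ℝ} (hl₀ : 0 < l₀) :
    HasDerivAt (tikhonovMin A T b)
      ((T *ᵥ tikhonovSolution A T b l₀) ⬝ᵥ (T *ᵥ tikhonovSolution A T b l₀)) l₀ := by
  have hu := continuousAt_tikhonovSolution A T b hT hl₀
  refine hasDerivAt_of_sub_eq_mul
    (g := fun l => (T *ᵥ tikhonovSolution A T b l) ⬝ᵥ (T *ᵥ tikhonovSolution A T b l₀))
    (by fun_prop) ?_
  filter_upwards [Ioi_mem_nhds hl₀] with l hl using tikhonovMin_sub A T b hT hl hl₀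

lemma hasDerivAt_log_det_tikhonovMatrix (hT : IsUnit T.det) {l₀ : ℝ} (hl₀ : 0 < l₀) :
    HasDerivAt (fun l => log (tikhonovMatrix A T l).det)
      ((tikhonovMatrix A T l₀)⁻¹ * (Tᵀ * T)).trace l₀ := by
  have hdet := isUnit_det_tikhonovMatrix A T hT hl₀
  exact ((hasDerivAt_det_add_smul (Aᵀ * A) (Tᵀ * T) hdet).log hdet.ne_zero).congr_deriv
    (mul_div_cancel_left₀ _ hdet.ne_zero)

end Tikhonov

section Evidence

variable {m n : Type*} [Fintype m] [Fintype n] [DecidableEq n]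
  (A : Matrix m n ℝ) (T : Matrix n n ℝ) (b : m → ℝ)

noncomputable def evidence (s t : ℝ) : ℝ :=
  ∫ u : n → ℝ,
    (2 * π * s ^ 2) ^ (-(Fintype.card m : ℝ) / 2) *
      exp (-(∑ i, (A *ᵥ u - b) i ^ 2) / (2 * s ^ 2)) *
      ((2 * π * t ^ 2) ^ (-(Fintype.card n : ℝ) / 2) * T.det *
        exp (-(∑ i, (T *ᵥ u) i ^ 2) / (2 * t ^ 2)))

/-- The logarithm of `evidence A T b s t / T.det` in the coordinates `x = s²`, `l = s²/t²`. -/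
noncomputable def logEvidence (x l : ℝ) : ℝ :=
  -(Fintype.card m / 2 : ℝ) * log (2 * π * x) + (Fintype.card n / 2 : ℝ) * log l
    - log (tikhonovMatrix A T l).det / 2 - tikhonovMin A T b l / (2 * x)

lemma evidence_eq_rpow (hT : IsUnit T.det) {s t : ℝ} (hs : 0 < s) (ht : 0 < t) :
    evidence A T b s t
      = (2 * π * s ^ 2) ^ (-(Fintype.card m : ℝ) / 2)
        * ((2 * π * t ^ 2) ^ (-(Fintype.card n : ℝ) / 2) * T.det)
        * exp (-tikhonovMin A T b (s ^ 2 / t ^ 2) / (2 * s ^ 2))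
        * ((2 * π * s ^ 2) ^ ((Fintype.card n : ℝ) / 2)
          / √(tikhonovMatrix A T (s ^ 2 / t ^ 2)).det) := by
  have hl : 0 < s ^ 2 / t ^ 2 := by positivity
  set w := tikhonovSolution A T b (s ^ 2 / t ^ 2)
  set H := tikhonovMatrix A T (s ^ 2 / t ^ 2)
  have hexp (u : n → ℝ) :
      exp (-(∑ i, (A *ᵥ u - b) i ^ 2) / (2 * s ^ 2))
          * exp (-(∑ i, (T *ᵥ u) i ^ 2) / (2 * t ^ 2))
        = exp (-tikhonovMin A T b (s ^ 2 / t ^ 2) / (2 * s ^ 2))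
          * exp (-((u - w) ⬝ᵥ H *ᵥ (u - w)) / (2 * s ^ 2)) := by
    have hscale : -((T *ᵥ u) ⬝ᵥ (T *ᵥ u)) / (2 * t ^ 2)
        = -(s ^ 2 / t ^ 2 * ((T *ᵥ u) ⬝ᵥ (T *ᵥ u))) / (2 * s ^ 2) := by
      field_simp
    rw [← exp_add, ← exp_add, sum_sq_eq_dotProduct_self, sum_sq_eq_dotProduct_self, hscale,
      ← add_div, ← add_div]
    congr 2
    linear_combination -tikhonov_complete_square A T b hT hl u
  have hgauss : ∫ u : n → ℝ, exp (-((u - w) ⬝ᵥ H *ᵥ (u - w)) / (2 * s ^ 2))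
      = (2 * π * s ^ 2) ^ ((Fintype.card n : ℝ) / 2) / √H.det := by
    rw [integral_sub_right_eq_self (fun u => exp (-(u ⬝ᵥ H *ᵥ u) / (2 * s ^ 2))) w]
    exact integral_exp_neg_dotProduct_mulVec_div (tikhonovMatrix_posDef A T hT hl)
      (by positivity)
  rw [← hgauss, ← integral_const_mul, evidence]
  congr 1 with u
  linear_combination (2 * π * s ^ 2) ^ (-(Fintype.card m : ℝ) / 2)
    * (2 * π * t ^ 2) ^ (-(Fintype.card n : ℝ) / 2) * T.det * hexp u

lemma evidence_eq (hT : IsUnit T.det) {s t : ℝ} (hs : 0 < s) (ht : 0 < t) :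
    evidence A T b s t = T.det * exp (logEvidence A T b (s ^ 2) (s ^ 2 / t ^ 2)) := by
  have hl : 0 < s ^ 2 / t ^ 2 := by positivity
  rw [evidence_eq_rpow A T b hT hs ht]
  set H := tikhonovMatrix A T (s ^ 2 / t ^ 2)
  set R := tikhonovMin A T b (s ^ 2 / t ^ 2)
  set M : ℝ := (Fintype.card m : ℝ)
  set N : ℝ := (Fintype.card n : ℝ)
  have hM : (2 * π * s ^ 2) ^ (-M / 2) = exp (-(M / 2) * log (2 * π * s ^ 2)) := by
    rw [rpow_def_of_pos (by positivity)]
    ring_nf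
  have hN : exp (N / 2 * log (s ^ 2 / t ^ 2))
      = (2 * π * s ^ 2) ^ (N / 2) * (2 * π * t ^ 2) ^ (-N / 2) := by
    rw [mul_comm, ← rpow_def_of_pos hl, neg_div, rpow_neg (by positivity), ← div_eq_mul_inv,
      ← div_rpow (by positivity) (by positivity)]
    congr 1
    field_simp
  have hH : exp (log H.det / 2) = √H.det := by
    rw [sqrt_eq_rpow, rpow_def_of_pos (tikhonovMatrix_posDef A T hT hl).det_pos,
      div_eq_mul_one_div]
  have hR : exp (-R / (2 * s ^ 2)) = (exp (R / (2 * s ^ 2)))⁻¹ := by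
    rw [neg_div, Real.exp_neg]
  have hℓ : logEvidence A T b (s ^ 2) (s ^ 2 / t ^ 2)
      = -(M / 2) * log (2 * π * s ^ 2) + N / 2 * log (s ^ 2 / t ^ 2) - log H.det / 2
        - R / (2 * s ^ 2) := rfl
  rw [hℓ, exp_sub, exp_sub, exp_add, hN, hH, hR, ← hM]
  field_simp

lemma hasDerivAt_logEvidence_fst {x₀ : ℝ} (hx₀ : 0 < x₀) (l : ℝ) :
    HasDerivAt (fun x => logEvidence A T b x l)
      ((tikhonovMin A T b l - Fintype.card m * x₀) / (2 * x₀ ^ 2)) x₀ := by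
  have hlog : HasDerivAt (fun x => log (2 * π * x)) (2 * π * 1 / (2 * π * x₀)) x₀ :=
    ((hasDerivAt_id x₀).const_mul (2 * π)).log (by positivity)
  have hfrac : HasDerivAt (fun x => tikhonovMin A T b l / (2 * x))
      ((0 * (2 * x₀) - tikhonovMin A T b l * (2 * 1)) / (2 * x₀) ^ 2) x₀ :=
    (hasDerivAt_const x₀ _).div ((hasDerivAt_id x₀).const_mul 2) (by positivity)
  refine ((((hlog.const_mul _).add_const _).sub_const _).sub hfrac).congr_deriv ?_
  field_simp
  ring

lemma hasDerivAt_logEvidence_snd (hT : IsUnit T.det) (x : ℝ) {l₀ : ℝ} (hl₀ : 0 < l₀) :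
    HasDerivAt (fun l => logEvidence A T b x l)
      (Fintype.card n / (2 * l₀) - ((tikhonovMatrix A T l₀)⁻¹ * (Tᵀ * T)).trace / 2
        - (T *ᵥ tikhonovSolution A T b l₀) ⬝ᵥ (T *ᵥ tikhonovSolution A T b l₀) / (2 * x))
      l₀ := by
  refine (((((hasDerivAt_log hl₀.ne').const_mul _).const_add _).sub
    ((hasDerivAt_log_det_tikhonovMatrix A T hT hl₀).div_const 2)).sub
    ((hasDerivAt_tikhonovMin A T b hT hl₀).div_const (2 * x))).congr_deriv ?_
  ring

lemma stationarity_of_logEvidence_max (hT : IsUnit T.det) {x₀ l₀ : ℝ} (hx₀ : 0 < x₀)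
    (hl₀ : 0 < l₀) (hmax : ∀ x l, 0 < x → 0 < l →
      T.det * exp (logEvidence A T b x l) ≤ T.det * exp (logEvidence A T b x₀ l₀)) :
    tikhonovMin A T b l₀ = Fintype.card m * x₀ ∧
      x₀ * (Fintype.card n - l₀ * ((tikhonovMatrix A T l₀)⁻¹ * (Tᵀ * T)).trace)
        = l₀ * ((T *ᵥ tikhonovSolution A T b l₀) ⬝ᵥ (T *ᵥ tikhonovSolution A T b l₀)) := by
  have hfst := eq_zero_of_isLocalMax_mul_exp hT.ne_zero
    (hasDerivAt_logEvidence_fst A T b hx₀ l₀)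
    (eventually_of_mem (Ioi_mem_nhds hx₀) fun x hx => hmax x l₀ hx hl₀)
  have hsnd := eq_zero_of_isLocalMax_mul_exp hT.ne_zero
    (hasDerivAt_logEvidence_snd A T b hT x₀ hl₀)
    (eventually_of_mem (Ioi_mem_nhds hl₀) fun l hl => hmax x₀ l hx₀ hl)
  field_simp at hfst hsnd
  constructor <;> linarith

lemma evidence_stationarity (hT : IsUnit T.det) {σ η : ℝ} (hσ : 0 < σ) (hη : 0 < η)
    (hmax : ∀ s t, 0 < s → 0 < t → evidence A T b s t ≤ evidence A T b σ η) :
    σ ^ 2 * (Fintype.card m - ((tikhonovMatrix A T (σ ^ 2 / η ^ 2))⁻¹ * (Aᵀ * A)).trace)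
        = (A *ᵥ tikhonovSolution A T b (σ ^ 2 / η ^ 2) - b)
          ⬝ᵥ (A *ᵥ tikhonovSolution A T b (σ ^ 2 / η ^ 2) - b) ∧
      η ^ 2 * (Fintype.card n
          - σ ^ 2 / η ^ 2 * ((tikhonovMatrix A T (σ ^ 2 / η ^ 2))⁻¹ * (Tᵀ * T)).trace)
        = (T *ᵥ tikhonovSolution A T b (σ ^ 2 / η ^ 2))
          ⬝ᵥ (T *ᵥ tikhonovSolution A T b (σ ^ 2 / η ^ 2)) := by
  have hl : 0 < σ ^ 2 / η ^ 2 := by positivity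
  have hE (x l : ℝ) (hx : 0 < x) (hl : 0 < l) :
      evidence A T b √x √(x / l) = T.det * exp (logEvidence A T b x l) := by
    have h := evidence_eq A T b hT (sqrt_pos.2 hx) (sqrt_pos.2 (div_pos hx hl))
    rwa [sq_sqrt hx.le, sq_sqrt (div_pos hx hl).le, div_div_cancel₀ hx.ne'] at h
  obtain ⟨hRm, hST⟩ := stationarity_of_logEvidence_max A T b hT (x₀ := σ ^ 2)
    (by positivity) hl fun x l hx hl' => by
      rw [← hE x l hx hl', ← hE _ _ (by positivity) hl, sqrt_sq hσ.le,
        div_div_cancel₀ (by positivity), sqrt_sq hη.le]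
      exact hmax _ _ (sqrt_pos.2 hx) (sqrt_pos.2 (div_pos hx hl'))
  have hR := tikhonovMin_eq A T b hT hl
  have htr := trace_inv_tikhonovMatrix_mul_add A T hT hl
  constructor
  · linear_combination hR - hRm - hST - σ ^ 2 * htr
  · field_simp at hST ⊢
    linear_combination hST

end Evidence

theorem maximum_evidence_stationarity_general
    (m n : ℕ)
    (A : Matrix (Fin m) (Fin n) ℝ) (T : Matrix (Fin n) (Fin n) ℝ)
    (hT : IsUnit T.det)
    (b : Fin m → ℝ) (σ η : ℝ) (hσ : 0 < σ) (hη : 0 < η)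
    (lam : ℝ) (hlamdef : lam = σ ^ 2 / η ^ 2)
    (H : Matrix (Fin n) (Fin n) ℝ)
    (hHdef : H = Aᵀ * A + lam • (Tᵀ * T))
    (ulam : Fin n → ℝ) (hulam : ulam = H⁻¹.mulVec (Aᵀ.mulVec b))
    (p : ℝ → ℝ → ℝ)
    (hp : ∀ s t : ℝ, p s t =
      ∫ u : Fin n → ℝ,
        (2 * Real.pi * s ^ 2) ^ (-(m : ℝ) / 2) *
          Real.exp (-(∑ i, (A.mulVec u - b) i ^ 2) / (2 * s ^ 2)) *
          ((2 * Real.pi * t ^ 2) ^ (-(n : ℝ) / 2) * T.det *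
            Real.exp (-(∑ i, (T.mulVec u) i ^ 2) / (2 * t ^ 2))))
    (hmax : ∀ s t : ℝ, 0 < s → 0 < t → p s t ≤ p σ η)
    (hden1 : (m : ℝ) - (H⁻¹ * (Aᵀ * A)).trace ≠ 0)
    (hden2 : (n : ℝ) - lam * (H⁻¹ * (Tᵀ * T)).trace ≠ 0) :
    σ ^ 2 = (∑ i, (A.mulVec ulam - b) i ^ 2) / ((m : ℝ) - (H⁻¹ * (Aᵀ * A)).trace) ∧
    η ^ 2 = (∑ i, (T.mulVec ulam) i ^ 2) / ((n : ℝ) - lam * (H⁻¹ * (Tᵀ * T)).trace) := by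
  subst hlamdef hHdef hulam
  have hp' : p = evidence A T b := by
    ext s t
    rw [hp, evidence, Fintype.card_fin, Fintype.card_fin]
  obtain ⟨hσ2, hη2⟩ := evidence_stationarity A T b hT hσ hη (hp' ▸ hmax)
  rw [Fintype.card_fin, ← sum_sq_eq_dotProduct_self] at hσ2 hη2
  exact ⟨eq_div_of_mul_eq hden1 hσ2, eq_div_of_mul_eq hden2 hη2⟩

/-- if `(σ, η)` maximizes the marginal likelihood `p(b|σ,η)` of the Gaussian
model (prior density `∝ exp(−‖Tu‖²/(2η²))` with `T` invertible, likelihood `N(Au, σ²I_m)`),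
then with `λ = σ²/η²`, `H = AᵀA + λTᵀT` positive definite, and `u_λ = H⁻¹Aᵀb`:
`σ² = ‖Au_λ−b‖²/(m − trace(H⁻¹AᵀA))` and `η² = ‖Tu_λ‖²/(n − λ trace(H⁻¹TᵀT))`,
provided the denominators are nonzero. -/
theorem maximum_evidence_stationarity
    (m n : ℕ) (hm : 0 < m) (hn : 0 < n)
    (A : Matrix (Fin m) (Fin n) ℝ) (T : Matrix (Fin n) (Fin n) ℝ)
    (hT : IsUnit T.det)
    (b : Fin m → ℝ) (σ η : ℝ) (hσ : 0 < σ) (hη : 0 < η)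
    (lam : ℝ) (hlamdef : lam = σ ^ 2 / η ^ 2)
    (H : Matrix (Fin n) (Fin n) ℝ)
    (hHdef : H = Aᵀ * A + lam • (Tᵀ * T)) (hH : H.PosDef)
    (ulam : Fin n → ℝ) (hulam : ulam = H⁻¹.mulVec (Aᵀ.mulVec b))
    (p : ℝ → ℝ → ℝ)
    (hp : ∀ s t : ℝ, p s t =
      ∫ u : Fin n → ℝ,
        (2 * Real.pi * s ^ 2) ^ (-(m : ℝ) / 2) *
          Real.exp (-(∑ i, (A.mulVec u - b) i ^ 2) / (2 * s ^ 2)) *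
          ((2 * Real.pi * t ^ 2) ^ (-(n : ℝ) / 2) * T.det *
            Real.exp (-(∑ i, (T.mulVec u) i ^ 2) / (2 * t ^ 2))))
    (hmax : ∀ s t : ℝ, 0 < s → 0 < t → p s t ≤ p σ η)
    (hden1 : (m : ℝ) - (H⁻¹ * (Aᵀ * A)).trace ≠ 0)
    (hden2 : (n : ℝ) - lam * (H⁻¹ * (Tᵀ * T)).trace ≠ 0) :
    σ ^ 2 = (∑ i, (A.mulVec ulam - b) i ^ 2) / ((m : ℝ) - (H⁻¹ * (Aᵀ * A)).trace) ∧
    η ^ 2 = (∑ i, (T.mulVec ulam) i ^ 2) / ((n : ℝ) - lam * (H⁻¹ * (Tᵀ * T)).trace) :=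
  maximum_evidence_stationarity_general m n A T hT b σ η hσ hη lam hlamdef H hHdef ulam hulam p hp
    hmax hden1 hden2
end
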